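/- Let {X_n : n ∈ ℕ} be a sequence of k_ω-spaces with X_n a closed subspace of X_{n+1} for every n. Then the colimit X = colim_n X_n is a k_ω-space. -/

import Mathlib

open Set Topology

def IsKOmegaStructure {X : Type*} [TopologicalSpace X] (K : ℕ → Set X) : Prop :=
  (∀ n, IsCompact (K n)) ∧ (⋃ n, K n) = Set.univ ∧
    ∀ F : Set X, IsClosed F ↔ ∀ n, IsClosed (((↑) : K n → X) ⁻¹' F)

def IsCompactCoverMap {X Y : Type*} [TopologicalSpace X] [TopologicalSpace Y]
    (f : X → Y) : Prop :=
  Continuous f ∧ Function.Surjective f ∧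
    ∀ C : Set Y, IsCompact C → ∃ K : Set X, IsCompact K ∧ f '' K = C

/-!
A Hausdorff `k_ω`-space is the colimit of the increasing compact, hence normal, sets
`K₀ ∪ ⋯ ∪ Kₙ`, and the colimit of an increasing chain of closed normal subspaces `Lₙ` is normal:
disjoint closed sets `F`, `G` are separated by disjoint closed sets `Cₙ, Dₙ ⊆ Lₙ`, built one level
at a time from normality of `Lₙ₊₁` so that `Cₙ₊₁` is a neighbourhood of `Cₙ ∪ (F ∩ Lₙ₊₁)` in
`Lₙ₊₁` (and likewise for `D`); the unions `⋃ Cₙ`, `⋃ Dₙ` are then open. Hence every `Xₙ`, and then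
`X`, is normal, and `X` is `T₁` because points are closed in each `Xₙ`. Coherence is transitive,
so the compact sets of all the `k_ω`-structures of the `Xₙ` together form one for `X`.
-/

section

variable {X : Type*} [TopologicalSpace X]

theorem isCoherentWith_range_iff {ι : Type*} {A : ι → Set X} :
    IsCoherentWith (range A) ↔
      ∀ F : Set X, IsClosed F ↔ ∀ i, IsClosed (((↑) : A i → X) ⁻¹' F) :=
  ⟨fun h F => by rw [h.isClosed_iff, forall_mem_range],
    fun h => IsCoherentWith.of_isClosed fun F hF => (h F).2 (forall_mem_range.1 hF)⟩

theorem isKOmegaStructure_iff {K : ℕ → Set X} :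
    IsKOmegaStructure K ↔
      (∀ n, IsCompact (K n)) ∧ ⋃ n, K n = univ ∧ IsCoherentWith (range K) := by
  rw [isCoherentWith_range_iff]
  rfl

theorem Topology.IsCoherentWith.image_val {ι κ : Type*} {A : ι → Set X}
    (hA : IsCoherentWith (range A)) {K : ∀ i, κ → Set (A i)}
    (hK : ∀ i, IsCoherentWith (range (K i))) :
    IsCoherentWith (range fun p : ι × κ => ((↑) : A p.1 → X) '' K p.1 p.2) :=
  IsCoherentWith.of_continuous_prop fun _f hf =>
    hA.continuous_iff.2 <| forall_mem_range.2 fun i =>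
      continuousOn_iff_continuous_domRestrict.2 <| (hK i).continuous_iff.2 <|
        forall_mem_range.2 fun j =>
          (hf _ ⟨(i, j), rfl⟩).comp continuous_subtype_val.continuousOn (mapsTo_image _ _)

theorem Topology.IsCoherentWith.t1Space {S : Set (Set X)} (hS : IsCoherentWith S)
    (hT1 : ∀ s ∈ S, T1Space s) : T1Space X :=
  ⟨fun _ => hS.isClosed_iff.2 fun s hs =>
    have := hT1 s hs
    (subsingleton_singleton.preimage Subtype.val_injective).isClosed⟩

theorem isClosed_preimage_val_trans {s t u : Set X} (hst : s ⊆ t)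
    (hs : IsClosed (((↑) : t → X) ⁻¹' s)) (ht : IsClosed (((↑) : u → X) ⁻¹' t)) :
    IsClosed (((↑) : u → X) ⁻¹' s) := by
  obtain ⟨C, hC, hCs⟩ := isClosed_induced_iff.1 hs
  have hCt : t ∩ C = s := by
    rw [← inter_eq_right.2 hst]
    exact Subtype.preimage_coe_eq_preimage_coe_iff.1 hCs
  rw [← hCt, preimage_inter]
  exact ht.inter (hC.preimage continuous_subtype_val)

theorem isClosed_of_isCoherentWith_chain {A : ℕ → Set X} (hmono : Monotone A)
    (hcoh : IsCoherentWith (range A))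
    (hsucc : ∀ n, IsClosed (((↑) : A (n + 1) → X) ⁻¹' A n)) (n : ℕ) : IsClosed (A n) := by
  have hle : ∀ m ≤ n, IsClosed (((↑) : A m → X) ⁻¹' A n) := fun m hm => by
    rw [preimage_val_eq_univ_of_subset (hmono hm)]
    exact isClosed_univ
  refine hcoh.isClosed_iff.2 <| forall_mem_range.2 fun m => ?_
  induction m with
  | zero => exact hle 0 n.zero_le
  | succ m ih =>
    rcases le_or_gt (m + 1) n with h | h
    · exact hle _ h
    · exact isClosed_preimage_val_trans (hmono (Nat.lt_succ_iff.1 h)) ih (hsucc m)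

theorem exists_isClosed_subset_disjoint_mem_nhdsWithin {L P Q : Set X} (hL : IsClosed L)
    [NormalSpace L] (hP : IsClosed P) (hPL : P ⊆ L) (hQ : IsClosed Q) (hPQ : Disjoint P Q) :
    ∃ P', IsClosed P' ∧ P' ⊆ L ∧ Disjoint P' Q ∧ ∀ x ∈ P, P' ∈ 𝓝[L] x := by
  have hQc : (((↑) : L → X) ⁻¹' Q)ᶜ ∈ 𝓝ˢ (((↑) : L → X) ⁻¹' P) :=
    (hQ.preimage continuous_subtype_val).isOpen_compl.mem_nhdsSet.2
      fun _ hx hxQ => hPQ.notMem_of_mem_left hx hxQ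
  obtain ⟨c, hc, hcc, hcQ⟩ :=
    exists_mem_nhdsSet_isClosed_subset hQc (hP.preimage continuous_subtype_val)
  refine ⟨(↑) '' c, hL.isClosedEmbedding_subtypeVal.isClosedMap _ hcc,
    Subtype.coe_image_subset L c, ?_, fun x hx => ?_⟩
  · rw [disjoint_left]
    rintro _ ⟨y, hy, rfl⟩
    exact hcQ hy
  · exact mem_nhds_subtype_iff_nhdsWithin.1 (mem_nhdsSet_iff_forall.1 hc ⟨x, hPL hx⟩ hx)

def IsClosedSeparation (L F G C D : Set X) : Prop :=
  IsClosed C ∧ IsClosed D ∧ C ⊆ L ∧ D ⊆ L ∧ Disjoint (C ∪ F) (D ∪ G)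

theorem IsClosedSeparation.mono {L L' F G C D : Set X} (h : IsClosedSeparation L F G C D)
    (hL : L ⊆ L') : IsClosedSeparation L' F G C D :=
  let ⟨hC, hD, hCL, hDL, hCD⟩ := h
  ⟨hC, hD, hCL.trans hL, hDL.trans hL, hCD⟩

theorem IsClosedSeparation.exists_mem_nhdsWithin {L F G C D : Set X} (hL : IsClosed L)
    [NormalSpace L] (hF : IsClosed F) (hG : IsClosed G) (h : IsClosedSeparation L F G C D) :
    ∃ C' D', IsClosedSeparation L F G C' D' ∧ (∀ x ∈ C ∪ F ∩ L, C' ∈ 𝓝[L] x) ∧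
      ∀ x ∈ D ∪ G ∩ L, D' ∈ 𝓝[L] x := by
  obtain ⟨hC, hD, hCL, hDL, hCD⟩ := h
  obtain ⟨C', hC', hC'L, hC'D, hC'nhds⟩ := exists_isClosed_subset_disjoint_mem_nhdsWithin hL
    (hC.union (hF.inter hL)) (union_subset hCL inter_subset_right) (hD.union hG)
    (hCD.mono_left (union_subset_union_right _ inter_subset_left))
  obtain ⟨D', hD', hD'L, hD'C, hD'nhds⟩ := exists_isClosed_subset_disjoint_mem_nhdsWithin hL
    (hD.union (hG.inter hL)) (union_subset hDL inter_subset_right) (hC'.union hF)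
    (disjoint_union_right.2 ⟨hC'D.symm, hCD.symm.mono_right subset_union_right⟩
      |>.mono_left (union_subset_union_right _ inter_subset_left))
  refine ⟨C', D', ⟨hC', hD', hC'L, hD'L, ?_⟩, hC'nhds, hD'nhds⟩
  exact disjoint_union_right.2 ⟨hD'C.symm, disjoint_union_left.2
    ⟨hC'D.mono_right subset_union_right, hCD.mono subset_union_right subset_union_right⟩⟩

theorem monotone_of_mem_nhdsWithin {L C : ℕ → Set X} (hL : Monotone L)
    (hCL : ∀ n, C n ⊆ L n) (hC : ∀ n, ∀ x ∈ C n, C (n + 1) ∈ 𝓝[L (n + 1)] x) : Monotone C :=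
  monotone_nat_of_le_succ fun n x hx =>
    mem_of_mem_nhdsWithin (hL n.le_succ (hCL n hx)) (hC n x hx)

theorem isOpen_iUnion_of_mem_nhdsWithin {L C : ℕ → Set X} (hL : Monotone L)
    (hcoh : IsCoherentWith (range L)) (hCmono : Monotone C)
    (hC : ∀ n, ∀ x ∈ C n, C (n + 1) ∈ 𝓝[L (n + 1)] x) : IsOpen (⋃ n, C n) := by
  refine hcoh.isOpen_iff.2 <| forall_mem_range.2 fun m => isOpen_iff_mem_nhds.2 ?_
  rintro x hx
  obtain ⟨n, hxn⟩ := mem_iUnion.1 hx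
  have hnhds := hC (max n m) x (hCmono (le_max_left n m) hxn)
  exact preimage_coe_mem_nhds_subtype.2 <| Filter.mem_of_superset
    (nhdsWithin_mono _ (hL (by omega)) hnhds) (subset_iUnion _ _)

theorem exists_seq_isClosedSeparation {L : ℕ → Set X} (hmono : Monotone L)
    (hclosed : ∀ n, IsClosed (L n)) [∀ n, NormalSpace (L n)] {F G : Set X} (hF : IsClosed F)
    (hG : IsClosed G) (hFG : Disjoint F G) :
    ∃ C D : ℕ → Set X, (∀ n, IsClosedSeparation (L n) F G (C n) (D n)) ∧
      (∀ n, ∀ x ∈ C n ∪ F ∩ L (n + 1), C (n + 1) ∈ 𝓝[L (n + 1)] x) ∧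
      ∀ n, ∀ x ∈ D n ∪ G ∩ L (n + 1), D (n + 1) ∈ 𝓝[L (n + 1)] x := by
  have hstep (n : ℕ) (p : Set X × Set X) (hp : IsClosedSeparation (L n) F G p.1 p.2) :
      ∃ q : Set X × Set X, IsClosedSeparation (L (n + 1)) F G q.1 q.2 ∧
        (∀ x ∈ p.1 ∪ F ∩ L (n + 1), q.1 ∈ 𝓝[L (n + 1)] x) ∧
        ∀ x ∈ p.2 ∪ G ∩ L (n + 1), q.2 ∈ 𝓝[L (n + 1)] x :=
    let ⟨C, D, h⟩ := (hp.mono (hmono n.le_succ)).exists_mem_nhdsWithin (hclosed _) hF hG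
    ⟨(C, D), h⟩
  have hempty : IsClosedSeparation (L 0) F G ∅ ∅ := by
    simpa [IsClosedSeparation] using hFG
  obtain ⟨C₀, D₀, h₀, -⟩ := hempty.exists_mem_nhdsWithin (hclosed 0) hF hG
  choose! next hnext using hstep
  let p : ℕ → Set X × Set X := fun n => Nat.rec (C₀, D₀) next n
  have hp (n : ℕ) : IsClosedSeparation (L n) F G (p n).1 (p n).2 :=
    Nat.rec h₀ (fun n ih => (hnext n _ ih).1) n
  exact ⟨fun n => (p n).1, fun n => (p n).2, hp, fun n => (hnext n _ (hp n)).2.1,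
    fun n => (hnext n _ (hp n)).2.2⟩

theorem normalSpace_of_isCoherentWith_chain {L : ℕ → Set X} (hmono : Monotone L)
    (hcover : ⋃ n, L n = univ) (hclosed : ∀ n, IsClosed (L n)) [∀ n, NormalSpace (L n)]
    (hcoh : IsCoherentWith (range L)) : NormalSpace X := by
  refine ⟨fun F G hF hG hFG => ?_⟩
  obtain ⟨C, D, hCD, hCnhds, hDnhds⟩ := exists_seq_isClosedSeparation hmono hclosed hF hG hFG
  have hCmono : Monotone C := monotone_of_mem_nhdsWithin hmono (fun n => (hCD n).2.2.1)
    fun n x hx => hCnhds n x (Or.inl hx)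
  have hDmono : Monotone D := monotone_of_mem_nhdsWithin hmono (fun n => (hCD n).2.2.2.1)
    fun n x hx => hDnhds n x (Or.inl hx)
  have hmem (x : X) : ∃ n, x ∈ L (n + 1) :=
    let ⟨n, hn⟩ := mem_iUnion.1 (hcover ▸ mem_univ x)
    ⟨n, hmono n.le_succ hn⟩
  refine ⟨⋃ n, C n, ⋃ n, D n,
    isOpen_iUnion_of_mem_nhdsWithin hmono hcoh hCmono fun n x hx => hCnhds n x (Or.inl hx),
    isOpen_iUnion_of_mem_nhdsWithin hmono hcoh hDmono fun n x hx => hDnhds n x (Or.inl hx),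
    fun x hx => ?_, fun x hx => ?_, ?_⟩
  · obtain ⟨n, hn⟩ := hmem x
    exact mem_iUnion.2 ⟨n + 1, mem_of_mem_nhdsWithin hn (hCnhds n x (Or.inr ⟨hx, hn⟩))⟩
  · obtain ⟨n, hn⟩ := hmem x
    exact mem_iUnion.2 ⟨n + 1, mem_of_mem_nhdsWithin hn (hDnhds n x (Or.inr ⟨hx, hn⟩))⟩
  · refine disjoint_iUnion_left.2 fun n => disjoint_iUnion_right.2 fun m => ?_
    exact ((hCD (max n m)).2.2.2.2.mono subset_union_left subset_union_left).mono
      (hCmono (le_max_left n m)) (hDmono (le_max_right n m))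

theorem IsKOmegaStructure.normalSpace [T2Space X] {K : ℕ → Set X}
    (hK : IsKOmegaStructure K) : NormalSpace X := by
  obtain ⟨hcompact, hcover, hcoh⟩ := isKOmegaStructure_iff.1 hK
  have hacc (n : ℕ) : IsCompact (accumulate K n) := isCompact_accumulate hcompact n
  have (n : ℕ) : CompactSpace (accumulate K n) := isCompact_iff_compactSpace.1 (hacc n)
  exact normalSpace_of_isCoherentWith_chain monotone_accumulate
    (by rw [iUnion_accumulate, hcover]) (fun n => (hacc n).isClosed)
    (hcoh.enlarge <| forall_mem_range.2 fun n => ⟨_, mem_range_self n, subset_accumulate⟩)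

theorem exists_isKOmegaStructure_of_isCoherentWith {A : ℕ → Set X}
    (hcover : ⋃ n, A n = univ) (hcoh : IsCoherentWith (range A))
    (hK : ∀ n, ∃ K : ℕ → Set (A n), IsKOmegaStructure K) :
    ∃ K : ℕ → Set X, IsKOmegaStructure K := by
  choose K hK using hK
  simp only [isKOmegaStructure_iff] at hK
  let B (p : ℕ × ℕ) : Set X := ((↑) : A p.1 → X) '' K p.1 p.2
  refine ⟨B ∘ Nat.unpair, isKOmegaStructure_iff.2 ⟨fun k => ((hK _).1 _).image
    continuous_subtype_val, eq_univ_of_forall fun x => ?_, ?_⟩⟩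
  · obtain ⟨n, hn⟩ := mem_iUnion.1 (hcover ▸ mem_univ x)
    obtain ⟨m, hm⟩ := mem_iUnion.1 ((hK n).2.1 ▸ mem_univ (⟨x, hn⟩ : A n))
    refine mem_iUnion.2 ⟨Nat.pair n m, ?_⟩
    rw [Function.comp_apply, Nat.unpair_pair]
    exact ⟨_, hm, rfl⟩
  · rw [Nat.surjective_unpair.range_comp]
    exact hcoh.image_val fun n => (hK n).2.2

end

theorem stmt10 {X : Type*} [TopologicalSpace X] (A : ℕ → Set X)
    (hmono : ∀ n, A n ⊆ A (n + 1)) (hunion : (⋃ n, A n) = Set.univ)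
    (hclosedsucc : ∀ n, IsClosed (((↑) : A (n + 1) → X) ⁻¹' (A n)))
    (hcolim : ∀ F : Set X, IsClosed F ↔ ∀ n, IsClosed (((↑) : A n → X) ⁻¹' F))
    (hk : ∀ n, T2Space (A n) ∧ ∃ K : ℕ → Set (A n), IsKOmegaStructure K) :
    T2Space X ∧ ∃ K : ℕ → Set X, IsKOmegaStructure K := by
  have hcoh : IsCoherentWith (range A) := isCoherentWith_range_iff.2 hcolim
  have hAmono : Monotone A := monotone_nat_of_le_succ hmono
  have (n : ℕ) : T2Space (A n) := (hk n).1
  have (n : ℕ) : NormalSpace (A n) := (hk n).2.choose_spec.normalSpace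
  have : NormalSpace X := normalSpace_of_isCoherentWith_chain hAmono hunion
    (isClosed_of_isCoherentWith_chain hAmono hcoh hclosedsucc) hcoh
  have : T1Space X := hcoh.t1Space <| forall_mem_range.2 fun _ => inferInstance
  exact ⟨inferInstance, exists_isKOmegaStructure_of_isCoherentWith hunion hcoh fun n => (hk n).2⟩
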